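/- arXiv:2205.01420 — 3 statements merged into one kernel-verified Lean document; each statement's English description precedes it below -/
import Mathlib

section
/- In RMPC, there is no infinite sequence of backward transitions R₀ ⇝ R₁ ⇝ R₂ ⇝ ⋯ starting from any reachable process R₀ (past well-foundedness); equivalently, the backward transition relation restricted to reachable processes is well-founded. -/
namespace RMPC

/-- Syntax of RMPC processes: standard forward processes are those without
executed (key-decorated) prefixes; reversible processes may contain them. -/
inductive Proc : Type
  | nil : Proc
  | pre (a : ℕ) (lam : ℝ) (P : Proc) : Proc
  | preK (a : ℕ) (lam : ℝ) (i : ℕ) (P : Proc) : Proc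
  | choice (P Q : Proc) : Proc
  | par (L : Set ℕ) (P Q : Proc) : Proc

/-- Standard forward processes: no executed (keyed) prefix occurs. -/
def std : Proc → Prop
  | .nil => True
  | .pre _ _ P => std P
  | .preK _ _ _ _ => False
  | .choice P Q => std P ∧ std Q
  | .par _ P Q => std P ∧ std Q

/-- The set of communication keys occurring in a process. -/
def keys : Proc → Finset ℕ
  | .nil => ∅
  | .pre _ _ P => keys P
  | .preK _ _ i P => insert i (keys P)
  | .choice P Q => keys P ∪ keys Q
  | .par _ P Q => keys P ∪ keys Q

/-- Transition labels `<a,λ>[i]`: an action, a rate and a communication key. -/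
structure Label where
  act : ℕ
  rate : ℝ
  key : ℕ

/-- Forward transition relation of RMPC (rules Act1, Act2, Cho, Par, Coo). -/
inductive Fw : Proc → Label → Proc → Prop
  | act1 {a : ℕ} {lam : ℝ} (i : ℕ) {P : Proc} : std P →
      Fw (.pre a lam P) ⟨a, lam, i⟩ (.preK a lam i P)
  | act2 {a : ℕ} {lam : ℝ} {i : ℕ} {b : ℕ} {mu : ℝ} {j : ℕ} {R R' : Proc} :
      Fw R ⟨b, mu, j⟩ R' → j ≠ i →
      Fw (.preK a lam i R) ⟨b, mu, j⟩ (.preK a lam i R')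
  | choL {R R' S : Proc} {ℓ : Label} : Fw R ℓ R' → std S →
      Fw (.choice R S) ℓ (.choice R' S)
  | choR {R S S' : Proc} {ℓ : Label} : Fw S ℓ S' → std R →
      Fw (.choice R S) ℓ (.choice R S')
  | parL {L : Set ℕ} {R R' S : Proc} {a : ℕ} {lam : ℝ} {i : ℕ} :
      Fw R ⟨a, lam, i⟩ R' → a ∉ L → i ∉ keys S →
      Fw (.par L R S) ⟨a, lam, i⟩ (.par L R' S)
  | parR {L : Set ℕ} {R S S' : Proc} {a : ℕ} {lam : ℝ} {i : ℕ} :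
      Fw S ⟨a, lam, i⟩ S' → a ∉ L → i ∉ keys R →
      Fw (.par L R S) ⟨a, lam, i⟩ (.par L R S')
  | coo {L : Set ℕ} {R R' S S' : Proc} {a : ℕ} {lam mu : ℝ} {i : ℕ} :
      Fw R ⟨a, lam, i⟩ R' → Fw S ⟨a, mu, i⟩ S' → a ∈ L →
      Fw (.par L R S) ⟨a, lam * mu, i⟩ (.par L R' S')

/-- Backward transition relation of RMPC, parameterized by the function `bw`
assigning to each forward rate `λ` the corresponding backward rate `λ̄`
(rules Act1ʳ, Act2ʳ, Choʳ, Parʳ, Cooʳ). -/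
inductive Bw (bw : ℝ → ℝ) : Proc → Label → Proc → Prop
  | act1 {a : ℕ} {lam : ℝ} (i : ℕ) {P : Proc} : std P →
      Bw bw (.preK a lam i P) ⟨a, bw lam, i⟩ (.pre a lam P)
  | act2 {a : ℕ} {lam : ℝ} {i : ℕ} {b : ℕ} {mu : ℝ} {j : ℕ} {R R' : Proc} :
      Bw bw R ⟨b, mu, j⟩ R' → j ≠ i →
      Bw bw (.preK a lam i R) ⟨b, mu, j⟩ (.preK a lam i R')
  | choL {R R' S : Proc} {ℓ : Label} : Bw bw R ℓ R' → std S →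
      Bw bw (.choice R S) ℓ (.choice R' S)
  | choR {R S S' : Proc} {ℓ : Label} : Bw bw S ℓ S' → std R →
      Bw bw (.choice R S) ℓ (.choice R S')
  | parL {L : Set ℕ} {R R' S : Proc} {a : ℕ} {lam : ℝ} {i : ℕ} :
      Bw bw R ⟨a, lam, i⟩ R' → a ∉ L → i ∉ keys S →
      Bw bw (.par L R S) ⟨a, lam, i⟩ (.par L R' S)
  | parR {L : Set ℕ} {R S S' : Proc} {a : ℕ} {lam : ℝ} {i : ℕ} :
      Bw bw S ⟨a, lam, i⟩ S' → a ∉ L → i ∉ keys R →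
      Bw bw (.par L R S) ⟨a, lam, i⟩ (.par L R S')
  | coo {L : Set ℕ} {R R' S S' : Proc} {a : ℕ} {lam mu : ℝ} {i : ℕ} :
      Bw bw R ⟨a, lam, i⟩ R' → Bw bw S ⟨a, mu, i⟩ S' → a ∈ L →
      Bw bw (.par L R S) ⟨a, lam * mu, i⟩ (.par L R' S')

/-- The backward label `<a,λ̄>[i]` corresponding to a forward label `<a,λ>[i]`. -/
def bwLab (bw : ℝ → ℝ) (ℓ : Label) : Label := ⟨ℓ.act, bw ℓ.rate, ℓ.key⟩

/-- One forward step (any label). -/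
def FwStep (R S : Proc) : Prop := ∃ ℓ, Fw R ℓ S

/-- Reachable processes: standard forward processes together with everything
derivable from them by finitely many forward transitions. -/
def Reachable (R : Proc) : Prop := ∃ P, std P ∧ Relation.ReflTransGen FwStep P R

/-- Sequences of forward transitions labeled by a sequence of labels. -/
inductive FwSeq : Proc → List Label → Proc → Prop
  | nil (R : Proc) : FwSeq R [] R
  | cons {R R' S : Proc} {ℓ : Label} {σ : List Label} :
      Fw R ℓ R' → FwSeq R' σ S → FwSeq R (ℓ :: σ) S

/-- Sequences of backward transitions labeled by a sequence of labels. -/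
inductive BwSeq (bw : ℝ → ℝ) : Proc → List Label → Proc → Prop
  | nil (R : Proc) : BwSeq bw R [] R
  | cons {R R' S : Proc} {ℓ : Label} {σ : List Label} :
      Bw bw R ℓ R' → BwSeq bw R' σ S → BwSeq bw R (ℓ :: σ) S

/-- Direction of a transition. -/
inductive Dir : Type
  | fw : Dir
  | bk : Dir

/-- A transition in either direction. -/
def Trans (bw : ℝ → ℝ) : Dir → Proc → Label → Proc → Prop
  | .fw => Fw
  | .bk => Bw bw

/-- The causal set of a process until a key: the keys appearing syntactically
before (i.e., causing) the given key. -/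
def cau : Proc → ℕ → Finset ℕ
  | .nil, _ => ∅
  | .pre _ _ _, _ => ∅
  | .preK _ _ j R, i => if j = i ∨ i ∉ keys R then ∅ else insert j (cau R i)
  | .choice R S, i => cau R i ∪ cau S i
  | .par _ R S, i => cau R i ∪ cau S i

/-- Process contexts (processes with a hole). -/
inductive Ctx : Type
  | hole : Ctx
  | preK (a : ℕ) (lam : ℝ) (i : ℕ) (c : Ctx) : Ctx
  | choL (c : Ctx) (S : Proc) : Ctx
  | choR (R : Proc) (c : Ctx) : Ctx
  | parL (L : Set ℕ) (c : Ctx) (S : Proc) : Ctx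
  | parR (L : Set ℕ) (R : Proc) (c : Ctx) : Ctx

/-- Plugging a process into the hole of a context. -/
def plug : Ctx → Proc → Proc
  | .hole, R => R
  | .preK a lam i c, R => .preK a lam i (plug c R)
  | .choL c S, R => .choice (plug c R) S
  | .choR Q c, R => .choice Q (plug c R)
  | .parL L c S, R => .par L (plug c R) S
  | .parR L Q c, R => .par L Q (plug c R)

/-- Two coinitial forward transitions derive from the two branches of the same
choice operator (condition 2 of the definition of conflicting transitions). -/
def ChoiceConf (R : Proc) (ℓ₁ : Label) (S₁ : Proc) (ℓ₂ : Label) (S₂ : Proc) : Prop :=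
  ∃ C P₁ P₂, R = plug C (.choice P₁ P₂) ∧
    ((∃ T₁ T₂, Fw P₁ ℓ₁ T₁ ∧ Fw P₂ ℓ₂ T₂ ∧
        S₁ = plug C (.choice T₁ P₂) ∧ S₂ = plug C (.choice P₁ T₂)) ∨
     (∃ T₁ T₂, Fw P₂ ℓ₁ T₂ ∧ Fw P₁ ℓ₂ T₁ ∧
        S₁ = plug C (.choice P₁ T₂) ∧ S₂ = plug C (.choice T₁ P₂)))

/-- Conflict of two coinitial transitions from `R`:
(1) a forward and a backward transition where the backward one undoes a cause
of the forward one's key, or (2) two forward transitions arising from the two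
branches of the same choice. -/
def Conflict (R : Proc) (d₁ : Dir) (ℓ₁ : Label) (S₁ : Proc)
    (d₂ : Dir) (ℓ₂ : Label) (S₂ : Proc) : Prop :=
  (d₁ = .fw ∧ d₂ = .bk ∧ ℓ₂.key ∈ cau S₁ ℓ₁.key) ∨
  (d₁ = .bk ∧ d₂ = .fw ∧ ℓ₁.key ∈ cau S₂ ℓ₂.key) ∨
  (d₁ = .fw ∧ d₂ = .fw ∧ ChoiceConf R ℓ₁ S₁ ℓ₂ S₂)

/-- Two coinitial transitions are concurrent when they are not in conflict. -/
def Concurrent (R : Proc) (d₁ : Dir) (ℓ₁ : Label) (S₁ : Proc)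
    (d₂ : Dir) (ℓ₂ : Label) (S₂ : Proc) : Prop :=
  ¬ Conflict R d₁ ℓ₁ S₁ d₂ ℓ₂ S₂ ∧ ¬ Conflict R d₂ ℓ₂ S₂ d₁ ℓ₁ S₁


lemma keys_of_std : ∀ {P : Proc}, std P → keys P = ∅
  | .nil, _ => rfl
  | .pre _ _ P, h => keys_of_std (P := P) h
  | .choice P Q, h => by
      simp [keys, keys_of_std (P := P) h.1, keys_of_std (P := Q) h.2]
  | .par _ P Q, h => by
      simp [keys, keys_of_std (P := P) h.1, keys_of_std (P := Q) h.2]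

lemma keys_bw {bw : ℝ → ℝ} {R R' : Proc} {ℓ : Label} (h : Bw bw R ℓ R') :
    ℓ.key ∈ keys R ∧ keys R' = keys R \ {ℓ.key} := by
  induction h with
  | act1 i hstd =>
      simp [keys, keys_of_std hstd]
  | act2 h hne ih =>
      obtain ⟨hmem, heq⟩ := ih
      constructor
      · simp [keys, hmem]
      · simp only [keys, heq]
        ext x
        simp only [Finset.mem_insert, Finset.mem_sdiff, Finset.mem_singleton]
        constructor
        · rintro (rfl | ⟨hx, hx'⟩)
          · exact ⟨Or.inl rfl, hne.symm⟩
          · exact ⟨Or.inr hx, hx'⟩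
        · rintro ⟨(rfl | hx), hx'⟩
          · exact Or.inl rfl
          · exact Or.inr ⟨hx, hx'⟩
  | choL h hstd ih =>
      obtain ⟨hmem, heq⟩ := ih
      refine ⟨by simp [keys, hmem], ?_⟩
      simp [keys, heq, keys_of_std hstd]
  | choR h hstd ih =>
      obtain ⟨hmem, heq⟩ := ih
      refine ⟨by simp [keys, hmem], ?_⟩
      simp [keys, heq, keys_of_std hstd]
  | parL h ha hi ih =>
      obtain ⟨hmem, heq⟩ := ih
      refine ⟨by simp [keys, hmem], ?_⟩
      simp only [keys, heq]
      ext x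
      simp only [Finset.mem_union, Finset.mem_sdiff, Finset.mem_singleton]
      constructor
      · rintro (⟨hx, hx'⟩ | hx)
        · exact ⟨Or.inl hx, hx'⟩
        · exact ⟨Or.inr hx, fun h' => hi (h' ▸ hx)⟩
      · rintro ⟨(hx | hx), hx'⟩
        · exact Or.inl ⟨hx, hx'⟩
        · exact Or.inr hx
  | parR h ha hi ih =>
      obtain ⟨hmem, heq⟩ := ih
      refine ⟨by simp [keys, hmem], ?_⟩
      simp only [keys, heq]
      ext x
      simp only [Finset.mem_union, Finset.mem_sdiff, Finset.mem_singleton]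
      constructor
      · rintro (hx | ⟨hx, hx'⟩)
        · exact ⟨Or.inl hx, fun h' => hi (h' ▸ hx)⟩
        · exact ⟨Or.inr hx, hx'⟩
      · rintro ⟨(hx | hx), hx'⟩
        · exact Or.inl hx
        · exact Or.inr ⟨hx, hx'⟩
  | coo h1 h2 ha ih1 ih2 =>
      obtain ⟨hmem1, heq1⟩ := ih1
      obtain ⟨hmem2, heq2⟩ := ih2
      refine ⟨by simp [keys, hmem1], ?_⟩
      simp [keys, heq1, heq2, Finset.union_sdiff_distrib]

lemma keys_card_bw {bw : ℝ → ℝ} {R R' : Proc} {ℓ : Label} (h : Bw bw R ℓ R') :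
    (keys R').card < (keys R).card := by
  obtain ⟨hmem, heq⟩ := keys_bw h
  rw [heq, ← Finset.erase_eq]
  exact Finset.card_erase_lt_of_mem hmem

/-- Past well-foundedness: there is no infinite sequence of backward
transitions starting from a reachable process. -/
theorem past_well_foundedness (bw : ℝ → ℝ) :
    ¬ ∃ f : ℕ → Proc, Reachable (f 0) ∧ ∀ n : ℕ, ∃ ℓ, Bw bw (f n) ℓ (f (n + 1)) := by
  rintro ⟨f, -, hf⟩
  have hlt : ∀ n, (keys (f (n + 1))).card < (keys (f n)).card := fun n => by
    obtain ⟨ℓ, hℓ⟩ := hf n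
    exact keys_card_bw hℓ
  have key : ∀ n, (keys (f n)).card + n ≤ (keys (f 0)).card := by
    intro n
    induction n with
    | zero => simp
    | succ n ih =>
        have := hlt n
        omega
  have := key ((keys (f 0)).card + 1)
  omega

end RMPC
end

section
/- For every RMPC reachable process R, the underlying continuous-time Markov chain M⟦R⟧ is time homogeneous and ergodic: its state graph is a finite strongly connected component. -/
namespace RMPC

/-- Renaming of communication keys. -/
def rename (f : ℕ → ℕ) : Proc → Proc
  | .nil => .nil
  | .pre a lam P => .pre a lam (rename f P)
  | .preK a lam i P => .preK a lam (f i) (rename f P)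
  | .choice P Q => .choice (rename f P) (rename f Q)
  | .par L P Q => .par L (rename f P) (rename f Q)

/-- The equivalence `≡_K`: processes that are syntactically identical up to a
consistent (bijective) renaming of keys in the same positions. -/
def KEq (R S : Proc) : Prop := ∃ f : ℕ ≃ ℕ, S = rename f R

/-- A transition of the underlying CTMC `M⟦R⟧` before quotienting: a forward
or backward transition with action `a` and rate `l`, the key being dropped. -/
def Step (bw : ℝ → ℝ) (R : Proc) (a : ℕ) (l : ℝ) (S : Proc) : Prop :=
  ∃ i, Fw R ⟨a, l, i⟩ S ∨ Bw bw R ⟨a, l, i⟩ S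

/-- A transition of `M⟦R⟧` in either direction, any label. -/
def AnyStep (bw : ℝ → ℝ) (R S : Proc) : Prop := ∃ a l, Step bw R a l S

/-- Reachability in `M⟦R⟧` (via forward and backward transitions). -/
def ReachAny (bw : ℝ → ℝ) : Proc → Proc → Prop :=
  Relation.ReflTransGen (AnyStep bw)

/-- The set of action-rate pairs labeling the transition bundles of `M⟦R⟧`
from the class of `S` to the class of `S'`. -/
def KStepSet (bw : ℝ → ℝ) (S S' : Proc) : Set (ℕ × ℝ) :=
  {p | ∃ T T', KEq S T ∧ KEq S' T' ∧ Step bw T p.1 p.2 T'}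

/-- The total rate in `M⟦R⟧` from the class of `S` to the class of `S'`. -/
noncomputable def q (bw : ℝ → ℝ) (S S' : Proc) : ℝ :=
  ∑ᶠ p ∈ KStepSet bw S S', p.2

/-- `F` is a finite set of representatives of the states of `M⟦R⟧`:
one representative per `≡_K`-class of processes reachable from `R`. -/
def RepSet (bw : ℝ → ℝ) (R : Proc) (F : Finset Proc) : Prop :=
  (∀ T ∈ F, ReachAny bw R T) ∧
  (∀ S, ReachAny bw R S → ∃ T ∈ F, KEq S T) ∧
  (∀ T ∈ F, ∀ T' ∈ F, KEq T T' → T = T')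

/-- A forward transition of `M⟦R⟧` between classes. -/
def FwKStep (S S' : Proc) : Prop := ∃ T T' ℓ, KEq S T ∧ KEq S' T' ∧ Fw T ℓ T'

/-- A backward transition of `M⟦R⟧` between classes. -/
def BwKStep (bw : ℝ → ℝ) (S S' : Proc) : Prop :=
  ∃ T T' ℓ, KEq S T ∧ KEq S' T' ∧ Bw bw T ℓ T'

/-- The parallel composition operator does not occur in the process. -/
def noPar : Proc → Prop
  | .nil => True
  | .pre _ _ P => noPar P
  | .preK _ _ _ P => noPar P
  | .choice P Q => noPar P ∧ noPar Q
  | .par _ _ _ => False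

/-! Forward and backward transitions only turn prefixes into keyed prefixes and back, so all
processes connected to `R` share the skeleton obtained by erasing keys. Such a process carries at
most as many keys as the skeleton has prefixes, so a permutation of keys turns it into one of the
finitely many decorations of the skeleton with keys below that number. Strong connectivity is the
loop lemma: every transition can be undone. -/

def eraseKeys : Proc → Proc
  | .nil => .nil
  | .pre a lam P => .pre a lam (eraseKeys P)
  | .preK a lam _ P => .pre a lam (eraseKeys P)
  | .choice P Q => .choice (eraseKeys P) (eraseKeys Q)
  | .par L P Q => .par L (eraseKeys P) (eraseKeys Q)

def prefixCount : Proc → ℕ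
  | .nil => 0
  | .pre _ _ P => prefixCount P + 1
  | .preK _ _ _ P => prefixCount P + 1
  | .choice P Q => prefixCount P + prefixCount Q
  | .par _ P Q => prefixCount P + prefixCount Q

theorem Fw.eraseKeys_eq {S S' : Proc} {ℓ : Label} (h : Fw S ℓ S') :
    eraseKeys S' = eraseKeys S := by
  induction h <;> simp_all [eraseKeys]

theorem Bw.eraseKeys_eq {bw : ℝ → ℝ} {S S' : Proc} {ℓ : Label} (h : Bw bw S ℓ S') :
    eraseKeys S' = eraseKeys S := by
  induction h <;> simp_all [eraseKeys]

theorem ReachAny.eraseKeys_eq {bw : ℝ → ℝ} {S T : Proc} (h : ReachAny bw S T) :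
    eraseKeys T = eraseKeys S := by
  induction h with
  | refl => rfl
  | tail _ step ih =>
    obtain ⟨_, _, _, hf | hb⟩ := step
    · exact hf.eraseKeys_eq.trans ih
    · exact hb.eraseKeys_eq.trans ih

theorem eraseKeys_rename (f : ℕ → ℕ) (S : Proc) : eraseKeys (rename f S) = eraseKeys S := by
  induction S <;> simp_all [rename, eraseKeys]

theorem keys_rename (f : ℕ → ℕ) (S : Proc) : keys (rename f S) = (keys S).image f := by
  induction S <;> simp_all [rename, keys, Finset.image_union]

theorem prefixCount_eraseKeys (S : Proc) : prefixCount (eraseKeys S) = prefixCount S := by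
  induction S <;> simp_all [eraseKeys, prefixCount]

theorem card_keys_le_prefixCount (S : Proc) : (keys S).card ≤ prefixCount S := by
  induction S with
  | nil => simp [keys]
  | pre _ _ P ih => simp only [keys, prefixCount]; omega
  | preK _ _ _ P ih =>
    simp only [keys, prefixCount]
    exact (Finset.card_insert_le _ _).trans (by omega)
  | choice P Q ihP ihQ | par _ P Q ihP ihQ =>
    simp only [keys, prefixCount]
    exact (Finset.card_union_le _ _).trans (by omega)

open scoped Classical in
noncomputable def decorations (N : ℕ) : Proc → Finset Proc
  | .nil => {.nil}
  | .pre a lam E | .preK a lam _ E =>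
    (decorations N E).image (.pre a lam) ∪
      (Finset.range N ×ˢ decorations N E).image fun p => .preK a lam p.1 p.2
  | .choice E₁ E₂ => (decorations N E₁ ×ˢ decorations N E₂).image fun p => .choice p.1 p.2
  | .par L E₁ E₂ => (decorations N E₁ ×ˢ decorations N E₂).image fun p => .par L p.1 p.2

theorem mem_decorations_eraseKeys {N : ℕ} {S : Proc} (hS : keys S ⊆ Finset.range N) :
    S ∈ decorations N (eraseKeys S) := by
  classical
  induction S with
  | nil => simp [decorations, eraseKeys]
  | pre _ _ P ih =>
    simp only [keys] at hS
    simp only [eraseKeys, decorations]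
    exact Finset.mem_union_left _ (Finset.mem_image_of_mem _ (ih hS))
  | preK a lam i P ih =>
    rw [keys, Finset.insert_subset_iff] at hS
    simp only [eraseKeys, decorations]
    exact Finset.mem_union_right _ <| Finset.mem_image_of_mem (fun p => Proc.preK a lam p.1 p.2)
      (Finset.mk_mem_product hS.1 (ih hS.2))
  | choice P Q ihP ihQ =>
    rw [keys, Finset.union_subset_iff] at hS
    simp only [eraseKeys, decorations]
    exact Finset.mem_image_of_mem (fun p => Proc.choice p.1 p.2)
      (Finset.mk_mem_product (ihP hS.1) (ihQ hS.2))
  | par L P Q ihP ihQ =>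
    rw [keys, Finset.union_subset_iff] at hS
    simp only [eraseKeys, decorations]
    exact Finset.mem_image_of_mem (fun p => Proc.par L p.1 p.2)
      (Finset.mk_mem_product (ihP hS.1) (ihQ hS.2))

theorem exists_perm_lt_card (s : Finset ℕ) : ∃ f : ℕ ≃ ℕ, ∀ x ∈ s, f x < s.card := by
  classical
  induction s using Finset.induction_on with
  | empty => exact ⟨Equiv.refl ℕ, by simp⟩
  | @insert a s ha ih =>
    obtain ⟨f, hf⟩ := ih
    refine ⟨f.trans (Equiv.swap (f a) s.card), fun x hx => ?_⟩
    rw [Finset.card_insert_of_notMem ha]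
    rcases Finset.mem_insert.1 hx with rfl | hx
    · simp
    · have hxa : f x ≠ f a := fun h => ha (f.injective h ▸ hx)
      rw [Equiv.trans_apply, Equiv.swap_apply_of_ne_of_ne hxa (hf x hx).ne]
      exact Nat.lt_succ_of_lt (hf x hx)

theorem exists_kEq_mem_decorations (S : Proc) :
    ∃ T ∈ decorations (prefixCount (eraseKeys S)) (eraseKeys S), KEq S T := by
  obtain ⟨f, hf⟩ := exists_perm_lt_card (keys S)
  have hkeys : keys (rename f S) ⊆ Finset.range (prefixCount (eraseKeys S)) := by
    rw [keys_rename, prefixCount_eraseKeys]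
    intro y hy
    obtain ⟨x, hx, rfl⟩ := Finset.mem_image.1 hy
    exact Finset.mem_range.2 ((hf x hx).trans_le (card_keys_le_prefixCount S))
  refine ⟨rename f S, ?_, f, rfl⟩
  simpa only [eraseKeys_rename] using mem_decorations_eraseKeys hkeys

theorem Fw.exists_bw (bw : ℝ → ℝ) {S S' : Proc} {ℓ : Label} (h : Fw S ℓ S') :
    ∃ l, Bw bw S' ⟨ℓ.act, l, ℓ.key⟩ S := by
  induction h with
  | act1 i hP => exact ⟨_, .act1 i hP⟩
  | act2 _ hne ih => exact ih.imp fun _ hb => .act2 hb hne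
  | choL _ hS ih => exact ih.imp fun _ hb => .choL hb hS
  | choR _ hR ih => exact ih.imp fun _ hb => .choR hb hR
  | parL _ ha hi ih => exact ih.imp fun _ hb => .parL hb ha hi
  | parR _ ha hi ih => exact ih.imp fun _ hb => .parR hb ha hi
  | coo _ _ ha ih₁ ih₂ =>
    obtain ⟨_, hb₁⟩ := ih₁
    obtain ⟨_, hb₂⟩ := ih₂
    exact ⟨_, .coo hb₁ hb₂ ha⟩

theorem Bw.exists_fw {bw : ℝ → ℝ} {S S' : Proc} {ℓ : Label} (h : Bw bw S ℓ S') :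
    ∃ l, Fw S' ⟨ℓ.act, l, ℓ.key⟩ S := by
  induction h with
  | act1 i hP => exact ⟨_, .act1 i hP⟩
  | act2 _ hne ih => exact ih.imp fun _ hf => .act2 hf hne
  | choL _ hS ih => exact ih.imp fun _ hf => .choL hf hS
  | choR _ hR ih => exact ih.imp fun _ hf => .choR hf hR
  | parL _ ha hi ih => exact ih.imp fun _ hf => .parL hf ha hi
  | parR _ ha hi ih => exact ih.imp fun _ hf => .parR hf ha hi
  | coo _ _ ha ih₁ ih₂ =>
    obtain ⟨_, hf₁⟩ := ih₁
    obtain ⟨_, hf₂⟩ := ih₂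
    exact ⟨_, .coo hf₁ hf₂ ha⟩

theorem AnyStep.symm {bw : ℝ → ℝ} {S T : Proc} (h : AnyStep bw S T) : AnyStep bw T S := by
  obtain ⟨a, _, i, hf | hb⟩ := h
  · obtain ⟨l, hb⟩ := hf.exists_bw bw
    exact ⟨a, l, i, .inr hb⟩
  · obtain ⟨l, hf⟩ := hb.exists_fw
    exact ⟨a, l, i, .inl hf⟩

theorem ReachAny.symm {bw : ℝ → ℝ} {S T : Proc} (h : ReachAny bw S T) : ReachAny bw T S :=
  Relation.reflTransGen_swap.1 (Relation.ReflTransGen.mono (fun _ _ => AnyStep.symm) _ _ h)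

theorem underlying_ctmc_ergodic_general (bw : ℝ → ℝ) {R : Proc} :
    (∃ F : Finset Proc, ∀ S, ReachAny bw R S → ∃ T ∈ F, KEq S T) ∧
    (∀ S S', ReachAny bw R S → ReachAny bw R S' → ReachAny bw S S') := by
  refine ⟨⟨decorations (prefixCount (eraseKeys R)) (eraseKeys R), fun S hS => ?_⟩,
    fun S S' hS hS' => hS.symm.trans hS'⟩
  rw [← hS.eraseKeys_eq]
  exact exists_kEq_mem_decorations S

/-- The underlying CTMC `M⟦R⟧` of a reachable process is time homogeneous
(its rates are constants, which holds by construction) and ergodic: its state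
graph — classes of `≡_K`-equivalent processes reachable from `R` — is a
finite strongly connected component. -/
theorem underlying_ctmc_ergodic (bw : ℝ → ℝ)
    (hbw : ∀ x y : ℝ, bw (x * y) = bw x * bw y) {R : Proc} (hR : Reachable R) :
    (∃ F : Finset Proc, ∀ S, ReachAny bw R S → ∃ T ∈ F, KEq S T) ∧
    (∀ S S', ReachAny bw R S → ReachAny bw R S' → ReachAny bw S S') :=
  underlying_ctmc_ergodic_general bw

end RMPC
end

section
/- A stationary CTMC with state space S and generator Q is time reversible (i.e., satisfies detailed balance π(s)q_{s,s′} = π(s′)q_{s′,s} for all s ≠ s′) if and only if Kolmogorov's criterion holds: for all n ≥ 2 and all distinct states s₁,…,sₙ, q_{s₁,s₂}·…·q_{s_{n-1},sₙ}·q_{sₙ,s₁} = q_{s₁,sₙ}·q_{sₙ,s_{n-1}}·…·q_{s₂,s₁}. -/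
/-!
Detailed balance, multiplied around a cycle, gives Kolmogorov's identity once the positive
factors `π` cancel. Conversely, the identity for simple cycles extends to all closed walks,
because a closed walk through a repeated state splits there into two shorter closed walks.
Fix a root `s₀` and, for each `s`, a path of positive rates from `s₀` to `s`; let `w s` be the
product of the rates along it divided by the product of the reversed rates. Closing the paths
to `u` and to `v` through the edge `u → v` shows `w u q(u,v) = w v q(v,u)`, so `w` is a positive
stationary measure. By irreducibility `π` is a multiple of `w` (`π - c w` is a nonnegative
stationary vector vanishing somewhere, hence everywhere), so `π` satisfies detailed balance too.
-/

lemma List.exists_eq_append_cons_append_cons_of_not_nodup {α : Type*} {l : List α}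
    (h : ¬ l.Nodup) : ∃ x c₁ c₂ c₃, l = c₁ ++ x :: (c₂ ++ x :: c₃) := by
  simp only [List.nodup_iff_sublist, not_forall, not_not] at h
  obtain ⟨x, hx⟩ := h
  obtain ⟨r₁, r₂, rfl, hx₁, hx₂⟩ := List.cons_sublist_iff.mp hx
  obtain ⟨c₁, c₂, rfl⟩ := List.append_of_mem hx₁
  obtain ⟨d, c₃, rfl⟩ := List.append_of_mem (List.singleton_sublist.mp hx₂)
  exact ⟨x, c₁, c₂ ++ d, c₃, by simp⟩

namespace Kolmogorov

section Walks

variable {S : Type} (Q : S → S → ℝ)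

def walkWeight : List S → ℝ
  | a :: b :: l => Q a b * walkWeight (b :: l)
  | _ => 1

/-- `cycleWeight Q [s₁, …, sₙ] = Q s₁ s₂ * ⋯ * Q sₙ₋₁ sₙ * Q sₙ s₁`. -/
def cycleWeight (l : List S) : ℝ :=
  walkWeight Q (l ++ l.take 1)

@[simp] lemma walkWeight_singleton (a : S) : walkWeight Q [a] = 1 := rfl

@[simp] lemma walkWeight_cons_cons (a b : S) (l : List S) :
    walkWeight Q (a :: b :: l) = Q a b * walkWeight Q (b :: l) := rfl

lemma cycleWeight_cons (a : S) (l : List S) :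
    cycleWeight Q (a :: l) = walkWeight Q (a :: l ++ [a]) := rfl

lemma walkWeight_append (l₁ l₂ : List S) (h₁ : l₁ ≠ []) (h₂ : l₂ ≠ []) :
    walkWeight Q (l₁ ++ l₂) =
      walkWeight Q l₁ * Q (l₁.getLast h₁) (l₂.head h₂) * walkWeight Q l₂ := by
  induction l₁ with
  | nil => contradiction
  | cons a t ih =>
    cases t with
    | nil => obtain ⟨b, l, rfl⟩ := List.exists_cons_of_ne_nil h₂; simp
    | cons b t =>
      simp only [List.cons_append, walkWeight_cons_cons]
      rw [← List.cons_append, ih (List.cons_ne_nil _ _), List.getLast_cons_cons]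
      ring

lemma walkWeight_append_cons (u : List S) (x : S) (v : List S) :
    walkWeight Q (u ++ x :: v) = walkWeight Q (u ++ [x]) * walkWeight Q (x :: v) := by
  rcases eq_or_ne u [] with rfl | hu
  · simp
  · rw [walkWeight_append Q u _ hu (List.cons_ne_nil _ _),
      walkWeight_append Q u _ hu (List.cons_ne_nil _ _)]
    simp

lemma walkWeight_reverse (l : List S) : walkWeight Q l.reverse = walkWeight (flip Q) l := by
  induction l with
  | nil => rfl
  | cons a l ih =>
    rcases eq_or_ne l [] with rfl | hl
    · rfl
    obtain ⟨b, l, rfl⟩ := List.exists_cons_of_ne_nil hl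
    rw [List.reverse_cons, walkWeight_append Q _ _ (by simp) (by simp), ih]
    simp [flip, mul_comm]

lemma walkWeight_pos {l : List S} (h : l.IsChain fun x y => 0 < Q x y) : 0 < walkWeight Q l := by
  induction l using List.twoStepInduction with
  | nil => exact one_pos
  | singleton => exact one_pos
  | cons_cons a b l _ ih =>
    rw [List.isChain_cons_cons] at h
    exact mul_pos h.1 (ih b h.2)

lemma cycleWeight_append_comm (l₁ l₂ : List S) :
    cycleWeight Q (l₁ ++ l₂) = cycleWeight Q (l₂ ++ l₁) := by
  rcases l₁ with _ | ⟨a, t₁⟩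
  · simp
  rcases l₂ with _ | ⟨b, t₂⟩
  · simp
  have h₁ := walkWeight_append_cons Q (a :: t₁) b (t₂ ++ [a])
  have h₂ := walkWeight_append_cons Q (b :: t₂) a (t₁ ++ [b])
  simp only [List.cons_append] at h₁ h₂
  simp only [List.cons_append, cycleWeight_cons, List.append_assoc, h₁, h₂, mul_comm]

lemma cycleWeight_cons_append_cons (x : S) (l₁ l₂ : List S) :
    cycleWeight Q (x :: (l₁ ++ x :: l₂)) =
      cycleWeight Q (x :: l₁) * cycleWeight Q (x :: l₂) := by
  simp only [cycleWeight_cons, List.cons_append, List.append_assoc]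
  rw [← List.cons_append, walkWeight_append_cons]
  rfl

lemma walkWeight_ofFn {k : ℕ} (g : Fin (k + 1) → S) :
    walkWeight Q (List.ofFn g) = ∏ i : Fin k, Q (g i.castSucc) (g i.succ) := by
  induction k with
  | zero => simp
  | succ k ih =>
    have h := ih (fun i => g i.succ)
    rw [List.ofFn_succ] at h ⊢
    rw [List.ofFn_succ, walkWeight_cons_cons, h, Fin.prod_univ_succ]
    simp

lemma cycleWeight_ofFn {m : ℕ} (f : Fin (m + 1) → S) :
    cycleWeight Q (List.ofFn f) = ∏ i : Fin (m + 1), Q (f i) (f (i + 1)) := by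
  have h : List.ofFn f ++ (List.ofFn f).take 1 = List.ofFn (Fin.snoc f (f 0)) := by
    rw [List.ofFn_succ' (Fin.snoc f (f 0))]
    simp [List.ofFn_succ]
  rw [cycleWeight, h, walkWeight_ofFn, Fin.prod_univ_castSucc, Fin.prod_univ_castSucc]
  simp [Fin.coeSucc_eq_succ, ← Fin.castSucc_succ]

variable {Q}

lemma cycleWeight_flip_of_nodup
    (hK : ∀ (n : ℕ) (f : Fin (n + 2) → S), Function.Injective f →
      ∏ i : Fin (n + 2), Q (f i) (f (i + 1)) = ∏ i : Fin (n + 2), Q (f (i + 1)) (f i))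
    {l : List S} (hl : l.Nodup) : cycleWeight (flip Q) l = cycleWeight Q l := by
  match l with
  | [] | [_] => rfl
  | a :: b :: l =>
    rw [← List.ofFn_get (a :: b :: l), cycleWeight_ofFn, cycleWeight_ofFn]
    exact (hK l.length _ (List.nodup_iff_injective_get.mp hl)).symm

lemma cycleWeight_flip_of_forall_nodup
    (h : ∀ l : List S, l.Nodup → cycleWeight (flip Q) l = cycleWeight Q l) (l : List S) :
    cycleWeight (flip Q) l = cycleWeight Q l := by
  by_cases hl : l.Nodup
  · exact h l hl
  -- rotate a repeated state `x` to the front and split the cycle there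
  obtain ⟨x, c₁, c₂, c₃, hsplit⟩ := l.exists_eq_append_cons_append_cons_of_not_nodup hl
  have h₁ := cycleWeight_flip_of_forall_nodup h (x :: c₂)
  have h₂ := cycleWeight_flip_of_forall_nodup h (x :: (c₃ ++ c₁))
  simp only [hsplit, cycleWeight_append_comm _ c₁, List.cons_append, List.append_assoc,
    cycleWeight_cons_append_cons, h₁, h₂]
termination_by l.length
decreasing_by all_goals simp [hsplit]; omega

end Walks

section RateMatrix

variable {S : Type} {Q : S → S → ℝ}

lemma prod_rate_perm_symm_of_detailedBalance {ι : Type*} [Fintype ι] {π : S → ℝ}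
    (hπ : ∀ s, π s ≠ 0) (hdb : ∀ s s', π s * Q s s' = π s' * Q s' s)
    (f : ι → S) (σ : Equiv.Perm ι) :
    ∏ i, Q (f i) (f (σ i)) = ∏ i, Q (f (σ i)) (f i) := by
  have hprod : ∏ i, π (f (σ i)) = ∏ i, π (f i) := Equiv.prod_comp σ fun i => π (f i)
  have hne : ∏ i, π (f i) ≠ 0 := Finset.prod_ne_zero_iff.mpr fun i _ => hπ (f i)
  refine mul_left_cancel₀ hne ?_
  calc (∏ i, π (f i)) * ∏ i, Q (f i) (f (σ i))
      = ∏ i, π (f (σ i)) * Q (f (σ i)) (f i) := by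
        rw [← Finset.prod_mul_distrib]; exact Finset.prod_congr rfl fun i _ => hdb _ _
    _ = (∏ i, π (f i)) * ∏ i, Q (f (σ i)) (f i) := by rw [Finset.prod_mul_distrib, hprod]

lemma walkWeight_mul_flip_eq (hcyc : ∀ l : List S, cycleWeight (flip Q) l = cycleWeight Q l)
    {a u v : S} {l₁ l₂ : List S} (hu : (a :: l₁).getLast (List.cons_ne_nil _ _) = u)
    (hv : (a :: l₂).getLast (List.cons_ne_nil _ _) = v) :
    walkWeight Q (a :: l₁) * Q u v * walkWeight (flip Q) (a :: l₂) =
      walkWeight (flip Q) (a :: l₁) * Q v u * walkWeight Q (a :: l₂) := by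
  have hcycle (P : S → S → ℝ) : cycleWeight P (a :: (l₁ ++ l₂.reverse)) =
      walkWeight P (a :: l₁) * P u v * walkWeight (flip P) (a :: l₂) := by
    have h := walkWeight_append P (a :: l₁) (a :: l₂).reverse (List.cons_ne_nil _ _) (by simp)
    rw [List.head_reverse, hu, hv, walkWeight_reverse] at h
    rw [← h, cycleWeight_cons]
    simp
  rw [← hcycle, ← hcyc, hcycle]
  rfl

lemma rate_pos_symm (hoff : ∀ s s' : S, s ≠ s' → 0 ≤ Q s s')
    (hirr : ∀ s s' : S, Relation.ReflTransGen (fun x y => x ≠ y ∧ 0 < Q x y) s s')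
    (hcyc : ∀ l : List S, cycleWeight (flip Q) l = cycleWeight Q l)
    {u v : S} (huv : u ≠ v) (h : 0 < Q u v) : 0 < Q v u := by
  obtain ⟨l, hchain, hlast⟩ := List.exists_isChain_cons_of_relationReflTransGen (hirr v u)
  have hcycle (P : S → S → ℝ) :
      cycleWeight P (u :: (v :: l).dropLast) = P u v * walkWeight P (v :: l) := by
    rw [cycleWeight_cons, List.cons_append, ← hlast, List.dropLast_append_getLast]
    rfl
  have hpos : 0 < flip Q u v * walkWeight (flip Q) (v :: l) := by
    rw [← hcycle, hcyc, hcycle]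
    exact mul_pos h (walkWeight_pos Q (hchain.imp fun _ _ h => h.2))
  exact (hoff v u huv.symm).lt_of_ne fun h0 => by simp [flip, ← h0] at hpos

lemma exists_pos_detailedBalance [Nonempty S] (hoff : ∀ s s' : S, s ≠ s' → 0 ≤ Q s s')
    (hirr : ∀ s s' : S, Relation.ReflTransGen (fun x y => x ≠ y ∧ 0 < Q x y) s s')
    (hcyc : ∀ l : List S, cycleWeight (flip Q) l = cycleWeight Q l) :
    ∃ w : S → ℝ, (∀ s, 0 < w s) ∧ ∀ s s', w s * Q s s' = w s' * Q s' s := by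
  obtain ⟨s₀⟩ := ‹Nonempty S›
  choose p hp hlast using fun s => List.exists_isChain_cons_of_relationReflTransGen (hirr s₀ s)
  have hF (s : S) : 0 < walkWeight Q (s₀ :: p s) := walkWeight_pos Q ((hp s).imp fun _ _ h => h.2)
  have hB (s : S) : 0 < walkWeight (flip Q) (s₀ :: p s) :=
    walkWeight_pos _ ((hp s).imp fun _ _ h => rate_pos_symm hoff hirr hcyc h.1 h.2)
  refine ⟨fun s => walkWeight Q (s₀ :: p s) / walkWeight (flip Q) (s₀ :: p s),
    fun s => div_pos (hF s) (hB s), fun u v => ?_⟩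
  have h := walkWeight_mul_flip_eq hcyc (hlast u) (hlast v)
  rw [div_mul_eq_mul_div, div_mul_eq_mul_div, div_eq_div_iff (hB u).ne' (hB v).ne']
  linear_combination h

lemma sum_rate_eq_zero [Fintype S] [DecidableEq S]
    (hdiag : ∀ s : S, Q s s = -∑ s' ∈ Finset.univ.erase s, Q s s') (s : S) :
    ∑ s', Q s s' = 0 := by
  rw [← Finset.add_sum_erase _ _ (Finset.mem_univ s), hdiag s, neg_add_cancel]

lemma stationary_of_detailedBalance [Fintype S] (hrow : ∀ s, ∑ s', Q s s' = 0) {w : S → ℝ}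
    (hw : ∀ s s', w s * Q s s' = w s' * Q s' s) (s' : S) : ∑ s, w s * Q s s' = 0 := by
  simp only [hw _ s', ← Finset.mul_sum, hrow, mul_zero]

lemma eq_zero_of_stationary_of_nonneg [Fintype S] (hoff : ∀ s s' : S, s ≠ s' → 0 ≤ Q s s')
    (hirr : ∀ s s' : S, Relation.ReflTransGen (fun x y => x ≠ y ∧ 0 < Q x y) s s')
    {v : S → ℝ} (hv : ∀ s, 0 ≤ v s) (hstat : ∀ s', ∑ s, v s * Q s s' = 0)
    {t : S} (ht : v t = 0) (s : S) : v s = 0 := by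
  induction hirr s t using Relation.ReflTransGen.head_induction_on with
  | refl => exact ht
  | @head x y hxy _ hy =>
    have hterm (u : S) : 0 ≤ v u * Q u y := by
      rcases eq_or_ne u y with rfl | hu
      · simp [hy]
      · exact mul_nonneg (hv u) (hoff u y hu)
    have hxy0 := (Finset.sum_eq_zero_iff_of_nonneg fun u _ => hterm u).mp (hstat y) x
      (Finset.mem_univ x)
    exact (mul_eq_zero.mp hxy0).resolve_right hxy.2.ne'

lemma exists_eq_mul_of_stationary [Fintype S] [Nonempty S]
    (hoff : ∀ s s' : S, s ≠ s' → 0 ≤ Q s s')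
    (hirr : ∀ s s' : S, Relation.ReflTransGen (fun x y => x ≠ y ∧ 0 < Q x y) s s')
    {π w : S → ℝ} (hπ : ∀ s', ∑ s, π s * Q s s' = 0)
    (hw : ∀ s', ∑ s, w s * Q s s' = 0) (hwpos : ∀ s, 0 < w s) :
    ∃ c, ∀ s, π s = c * w s := by
  obtain ⟨t, -, ht⟩ :=
    Finset.exists_min_image Finset.univ (fun s => π s / w s) Finset.univ_nonempty
  refine ⟨π t / w t, fun s => sub_eq_zero.mp (eq_zero_of_stationary_of_nonneg hoff hirr
    (v := fun s => π s - π t / w t * w s) (fun s => ?_) (fun s' => ?_) (t := t) ?_ s)⟩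
  · have := ht s (Finset.mem_univ s)
    rw [div_le_div_iff₀ (hwpos t) (hwpos s)] at this
    rw [sub_nonneg, div_mul_eq_mul_div, div_le_iff₀ (hwpos t)]
    linarith
  · simp only [sub_mul, Finset.sum_sub_distrib, mul_assoc, ← Finset.mul_sum, hπ, hw, mul_zero,
      sub_zero]
  · simp [div_mul_cancel₀ _ (hwpos t).ne']

end RateMatrix

end Kolmogorov

open Kolmogorov in
theorem kolmogorov_criterion_general
    {S : Type} [Fintype S] [DecidableEq S] (Q : S → S → ℝ) (π : S → ℝ)
    (hoff : ∀ s s' : S, s ≠ s' → 0 ≤ Q s s')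
    (hdiag : ∀ s : S, Q s s = -∑ s' ∈ Finset.univ.erase s, Q s s')
    (hirr : ∀ s s' : S, Relation.ReflTransGen (fun x y => x ≠ y ∧ 0 < Q x y) s s')
    (hpos : ∀ s : S, 0 < π s)
    (hstat : ∀ s' : S, ∑ s : S, π s * Q s s' = 0) :
    (∀ s s' : S, s ≠ s' → π s * Q s s' = π s' * Q s' s) ↔
    (∀ (n : ℕ) (f : Fin (n + 2) → S), Function.Injective f →
      ∏ i : Fin (n + 2), Q (f i) (f (i + 1)) =
      ∏ i : Fin (n + 2), Q (f (i + 1)) (f i)) := by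
  constructor
  · intro hdb n f _
    refine prod_rate_perm_symm_of_detailedBalance (fun s => (hpos s).ne') (fun s s' => ?_) f
      (Equiv.addRight 1)
    rcases eq_or_ne s s' with rfl | hss'
    · rfl
    · exact hdb s s' hss'
  · intro hK s s' _
    have : Nonempty S := ⟨s⟩
    have hcyc := cycleWeight_flip_of_forall_nodup fun _ => cycleWeight_flip_of_nodup hK
    obtain ⟨w, hwpos, hw⟩ := exists_pos_detailedBalance hoff hirr hcyc
    obtain ⟨c, hc⟩ := exists_eq_mul_of_stationary hoff hirr hstat
      (stationary_of_detailedBalance (sum_rate_eq_zero hdiag) hw) hwpos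
    rw [hc, hc, mul_assoc, mul_assoc, hw]

/-- Kolmogorov's criterion: a stationary ergodic finite-state CTMC with
generator `Q` (nonnegative off-diagonal entries, rows summing to zero,
irreducible) and stationary distribution `π` (positive, normalized,
satisfying global balance) is time reversible — i.e., satisfies detailed
balance `π(s)·q_{s,s'} = π(s')·q_{s',s}` for all `s ≠ s'` — if and only if
for all `n ≥ 2` and all distinct states `s₁, …, sₙ` the product of the rates
around the cycle equals the product of the rates around the reversed cycle
(cyclic successor on `Fin (n+2)`, so that `n + 2 ≥ 2` ranges over all cycle
lengths at least 2). -/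
theorem kolmogorov_criterion
    {S : Type} [Fintype S] [DecidableEq S] (Q : S → S → ℝ) (π : S → ℝ)
    (hoff : ∀ s s' : S, s ≠ s' → 0 ≤ Q s s')
    (hdiag : ∀ s : S, Q s s = -∑ s' ∈ Finset.univ.erase s, Q s s')
    (hirr : ∀ s s' : S, Relation.ReflTransGen (fun x y => x ≠ y ∧ 0 < Q x y) s s')
    (hpos : ∀ s : S, 0 < π s)
    (hsum : ∑ s : S, π s = 1)
    (hstat : ∀ s' : S, ∑ s : S, π s * Q s s' = 0) :
    (∀ s s' : S, s ≠ s' → π s * Q s s' = π s' * Q s' s) ↔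
    (∀ (n : ℕ) (f : Fin (n + 2) → S), Function.Injective f →
      ∏ i : Fin (n + 2), Q (f i) (f (i + 1)) =
      ∏ i : Fin (n + 2), Q (f (i + 1)) (f i)) :=
  kolmogorov_criterion_general Q π hoff hdiag hirr hpos hstat
end
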